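/- For all integers k ≥ 2 and p with 0 ≤ p ≤ k, it holds that 2k(k−1) ≥ ((k−1)/k)^{k−p} · (k(5k−4p−3) + p² + p); that is, the function h(p,k) = 2k(k−1) − ((k−1)/k)^{k−p}·(k(5k−4p−3) + p² + p) is nonnegative. -/

import Mathlib

lemma bern2 (x : ℝ) (hx : 0 ≤ x) (n : ℕ) :
    1 + n * x + (n * ((n : ℝ) - 1)) / 2 * x ^ 2 ≤ (1 + x) ^ n := by
  induction n with
  | zero => simp
  | succ n ih =>
    have h1 : (0:ℝ) ≤ (n:ℝ) * ((n:ℝ) - 1) := by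
      rcases Nat.eq_zero_or_pos n with h | h
      · simp [h]
      · have : (1:ℝ) ≤ n := by exact_mod_cast h
        nlinarith
    have hx1 : (0:ℝ) ≤ 1 + x := by linarith
    push_cast
    rw [pow_succ (1 + x) n]
    nlinarith [mul_le_mul_of_nonneg_right ih hx1,
      mul_nonneg (mul_nonneg h1 hx) hx,
      mul_nonneg (mul_nonneg (mul_nonneg h1 hx) hx) hx,
      mul_nonneg (Nat.cast_nonneg (α := ℝ) n) hx]

/-- For all integers `k ≥ 2` and `0 ≤ p ≤ k`,
`2k(k−1) ≥ ((k−1)/k)^{k−p} · (k(5k−4p−3) + p² + p)`. -/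
theorem hFn_nonneg (k p : ℕ) (hk : 2 ≤ k) (hp : p ≤ k) :
    (((k : ℝ) - 1) / k) ^ (k - p) *
        ((k : ℝ) * (5 * k - 4 * p - 3) + (p : ℝ) ^ 2 + p) ≤
      2 * (k : ℝ) * ((k : ℝ) - 1) := by
  set n : ℕ := k - p with hn
  have hK : (2:ℝ) ≤ (k:ℝ) := by exact_mod_cast hk
  have hnk : (n:ℝ) = (k:ℝ) - (p:ℝ) := by
    rw [hn]; push_cast [hp]; ring
  set y : ℝ := (k:ℝ) - 1 with hy
  have hy1 : 1 ≤ y := by simp only [hy]; linarith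
  have hy0 : 0 < y := by linarith
  have hy10 : 0 < y + 1 := by linarith
  have hkeq : (k:ℝ) = y + 1 := by simp [hy]
  have hpK : (p:ℝ) = (y + 1) - (n:ℝ) := by rw [hnk, hkeq]; ring
  have h1 : (0:ℝ) ≤ (n:ℝ) * ((n:ℝ) - 1) := by
    rcases Nat.eq_zero_or_pos n with h | h
    · simp [h]
    · have : (1:ℝ) ≤ n := by exact_mod_cast h
      nlinarith
  have hA : ((k:ℝ) * (5 * k - 4 * p - 3) + (p:ℝ) ^ 2 + p)
      = 2 * (y + 1) * y + 2 * (y + 1) * n + (n:ℝ) * ((n:ℝ) - 1) := by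
    rw [hpK, hkeq]; ring
  have hb := bern2 (1 / y) (by positivity) n
  have hs : ((y + 1) / y) = 1 + 1 / y := by field_simp
  have hAs : 2 * (y + 1) * y + 2 * (y + 1) * n + (n:ℝ) * ((n:ℝ) - 1)
      ≤ 2 * (y + 1) * y * ((y + 1) / y) ^ n := by
    rw [hs]
    have expand : 2 * (y + 1) * y * (1 + n * (1 / y) + ((n:ℝ) * ((n:ℝ) - 1)) / 2 * (1 / y) ^ 2)
        = 2 * (y + 1) * y + 2 * (y + 1) * n + (y + 1) * ((n:ℝ) * ((n:ℝ) - 1)) / y := by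
      field_simp
    have hmul := mul_le_mul_of_nonneg_left hb (show (0:ℝ) ≤ 2 * (y + 1) * y by positivity)
    rw [expand] at hmul
    have hlast : (n:ℝ) * ((n:ℝ) - 1) ≤ (y + 1) * ((n:ℝ) * ((n:ℝ) - 1)) / y := by
      rw [le_div_iff₀ hy0]
      nlinarith
    linarith
  have hr0 : (0:ℝ) ≤ y / (y + 1) := by positivity
  have hgoal : (y / (y + 1)) ^ n * ((k:ℝ) * (5 * k - 4 * p - 3) + (p:ℝ) ^ 2 + p)
      ≤ 2 * (y + 1) * y := by
    rw [hA]
    calc (y / (y + 1)) ^ n * (2 * (y + 1) * y + 2 * (y + 1) * n + (n:ℝ) * ((n:ℝ) - 1))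
        ≤ (y / (y + 1)) ^ n * (2 * (y + 1) * y * ((y + 1) / y) ^ n) :=
          mul_le_mul_of_nonneg_left hAs (pow_nonneg hr0 n)
      _ = 2 * (y + 1) * y * ((y / (y + 1)) * ((y + 1) / y)) ^ n := by
          rw [mul_pow]; ring
      _ = 2 * (y + 1) * y := by
          rw [div_mul_div_comm]
          rw [show y * (y + 1) / ((y + 1) * y) = 1 by field_simp]
          simp
  calc (((k:ℝ) - 1) / k) ^ (k - p) * ((k:ℝ) * (5 * k - 4 * p - 3) + (p:ℝ) ^ 2 + p)
      = (y / (y + 1)) ^ n * ((k:ℝ) * (5 * k - 4 * p - 3) + (p:ℝ) ^ 2 + p) := by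
        rw [← hn, hkeq]; ring_nf
    _ ≤ 2 * (y + 1) * y := hgoal
    _ = 2 * (k:ℝ) * ((k:ℝ) - 1) := by rw [hkeq]; ring
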